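/- Let p : X → [0,1] be measurable on (X, P_X), U uniform on [0,1], R = ∫_X 1_{p(x) > U} P_X(dx). Then Var[R] ≤ (∫_X √(p(x)(1 − p(x))) P_X(dx))² ≤ ∫_X p(x)(1 − p(x)) P_X(dx) ≤ ∫_X min(p(x), 1 − p(x)) P_X(dx). -/

import Mathlib

/-!
Write `g t = μ {p > t}`, so that `R = g ∘ U`. The layer-cake formula on `[0, 1]` gives
`E[R] = ∫ p dμ`, and since `g t ^ 2 = (μ ⊗ μ) {min (p x) (p y) > t}` it also gives
`E[R²] = ∫∫ min (p x) (p y)`. Hence `Var R = ∫∫ (min (p x) (p y) - p x p y)`, and the elementary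
bound `min a b - a b ≤ √(a (1 - a)) √(b (1 - b))` on `[0, 1]²` turns this double integral into
`(∫ √(p (1 - p)))²`. The second inequality is `(E f)² ≤ E[f²]`, the third the pointwise bound
`a (1 - a) ≤ min a (1 - a)`.
-/

open MeasureTheory ProbabilityTheory Set

instance : IsProbabilityMeasure (volume.restrict (Icc (0 : ℝ) 1)) := ⟨by simp⟩

lemma mul_le_min_of_mem_Icc {a b : ℝ} (ha : a ∈ Icc 0 1) (hb : b ∈ Icc 0 1) :
    a * b ≤ min a b :=
  le_min (mul_le_of_le_one_right ha.1 hb.2) (mul_le_of_le_one_left hb.1 ha.2)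

lemma min_sub_mul_le_sqrt_mul_sqrt {a b : ℝ} (ha : a ∈ Icc 0 1) (hb : b ∈ Icc 0 1) :
    min a b - a * b ≤ √(a * (1 - a)) * √(b * (1 - b)) := by
  wlog hab : a ≤ b generalizing a b
  · rw [min_comm, mul_comm a, mul_comm (√_)]
    exact this hb ha (le_of_not_ge hab)
  obtain ⟨ha0, ha1⟩ := ha
  obtain ⟨hb0, hb1⟩ := hb
  have h₁ : 0 ≤ a * (1 - a) := mul_nonneg ha0 (by linarith)
  have h₂ : 0 ≤ a * (1 - b) := mul_nonneg ha0 (by linarith)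
  rw [min_eq_left hab, ← Real.sqrt_mul h₁, Real.le_sqrt (by linarith) (by nlinarith)]
  -- `a (1 - b)` is at most both `a (1 - a)` and `b (1 - b)`
  nlinarith [mul_le_mul (mul_le_mul_of_nonneg_left (by linarith : 1 - b ≤ 1 - a) ha0)
    (mul_le_mul_of_nonneg_right hab (by linarith : 0 ≤ 1 - b)) h₂ h₁]

lemma mul_one_sub_mem_Icc {a : ℝ} (ha : a ∈ Icc 0 1) : a * (1 - a) ∈ Icc 0 1 :=
  ⟨mul_nonneg ha.1 (sub_nonneg.2 ha.2), by nlinarith [ha.1, ha.2]⟩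

lemma sqrt_mul_one_sub_mem_Icc {a : ℝ} (ha : a ∈ Icc 0 1) : √(a * (1 - a)) ∈ Icc 0 1 :=
  ⟨Real.sqrt_nonneg _, Real.sqrt_le_one.2 (mul_one_sub_mem_Icc ha).2⟩

lemma min_one_sub_mem_Icc {a : ℝ} (ha : a ∈ Icc 0 1) : min a (1 - a) ∈ Icc 0 1 :=
  ⟨le_min ha.1 (sub_nonneg.2 ha.2), min_le_of_left_le ha.2⟩

lemma mul_one_sub_le_min {a : ℝ} (ha : a ∈ Icc 0 1) : a * (1 - a) ≤ min a (1 - a) :=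
  le_min (by nlinarith [ha.1, ha.2]) (by nlinarith [ha.1, ha.2])

lemma sq_integral_le_integral_sq {Ω : Type*} [MeasurableSpace Ω] {P : Measure Ω}
    [IsProbabilityMeasure P] {g : Ω → ℝ} (hg : MemLp g 2 P) :
    (∫ ω, g ω ∂P) ^ 2 ≤ ∫ ω, g ω ^ 2 ∂P := by
  have h := variance_nonneg g P
  rw [variance_eq_sub hg] at h
  simpa [sub_nonneg] using h

section MeasureReal

variable {X : Type*} [MeasurableSpace X] {μ : Measure X} {f : X → ℝ}

lemma antitone_measureReal_lt [IsFiniteMeasure μ] (f : X → ℝ) :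
    Antitone fun t => μ.real {x | t < f x} :=
  fun _ _ hst => measureReal_mono fun _ hx => lt_of_le_of_lt hst hx

lemma measureReal_lt_sq [SFinite μ] (f : X → ℝ) (t : ℝ) :
    μ.real {x | t < f x} ^ 2 = (μ.prod μ).real {z | t < min (f z.1) (f z.2)} := by
  have h : {z : X × X | t < min (f z.1) (f z.2)} = {x | t < f x} ×ˢ {x | t < f x} := by
    ext z; simp
  rw [h, measureReal_prod_prod, sq]

variable [IsFiniteMeasure μ]

lemma integral_Icc_measureReal_lt {M : ℝ} (hf : Measurable f) (hfM : ∀ x, f x ∈ Icc 0 M) :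
    ∫ t in Icc 0 M, μ.real {x | t < f x} = ∫ x, f x ∂μ := by
  rw [(Integrable.of_mem_Icc 0 M hf.aemeasurable (ae_of_all _ hfM)).integral_eq_integral_meas_lt
      (ae_of_all _ fun x => (hfM x).1), integral_Icc_eq_integral_Ioc]
  refine (setIntegral_eq_of_subset_of_ae_sdiff_eq_zero nullMeasurableSet_Ioi Ioc_subset_Ioi_self
    (ae_of_all _ fun t ht => ?_)).symm
  have hMt : M < t := not_le.1 fun htM => ht.2 ⟨ht.1, htM⟩
  have h : {x | t < f x} = ∅ := eq_empty_of_forall_notMem fun x hx => by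
    linarith [(hfM x).2, hx.out]
  simp [h]

lemma variance_measureReal_lt (hf : Measurable f) (hf01 : ∀ x, f x ∈ Icc 0 1) :
    Var[fun t => μ.real {x | t < f x}; volume.restrict (Icc 0 1)] =
      ∫ z, (min (f z.1) (f z.2) - f z.1 * f z.2) ∂(μ.prod μ) := by
  have hmin : ∀ z : X × X, min (f z.1) (f z.2) ∈ Icc 0 1 := fun z =>
    ⟨le_min (hf01 z.1).1 (hf01 z.2).1, min_le_of_left_le (hf01 z.1).2⟩
  have hmin_meas : Measurable fun z : X × X => min (f z.1) (f z.2) := by fun_prop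
  have hg : MemLp (fun t => μ.real {x | t < f x}) 2 (volume.restrict (Icc 0 1)) :=
    memLp_of_bounded (ae_of_all _ fun _ => ⟨measureReal_nonneg, measureReal_mono (subset_univ _)⟩)
      (antitone_measureReal_lt f).measurable.aestronglyMeasurable 2
  rw [variance_eq_sub hg]
  simp only [Pi.pow_apply, measureReal_lt_sq]
  rw [integral_Icc_measureReal_lt hmin_meas hmin, integral_Icc_measureReal_lt hf hf01, sq,
    ← integral_prod_mul, integral_sub
      (Integrable.of_mem_Icc 0 1 hmin_meas.aemeasurable (ae_of_all _ hmin))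
      (Integrable.of_mem_Icc 0 1 (by fun_prop)
        (ae_of_all _ fun z => unitInterval.mul_mem (hf01 z.1) (hf01 z.2)))]

lemma variance_measureReal_lt_le (hf : Measurable f) (hf01 : ∀ x, f x ∈ Icc 0 1) :
    Var[fun t => μ.real {x | t < f x}; volume.restrict (Icc 0 1)] ≤
      (∫ x, √(f x * (1 - f x)) ∂μ) ^ 2 := by
  rw [variance_measureReal_lt hf hf01, sq, ← integral_prod_mul]
  have hsqrt : Integrable (fun x => √(f x * (1 - f x))) μ :=
    Integrable.of_mem_Icc 0 1 (by fun_prop) (ae_of_all _ fun x => sqrt_mul_one_sub_mem_Icc (hf01 x))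
  exact integral_mono_of_nonneg
    (ae_of_all _ fun z => sub_nonneg.2 (mul_le_min_of_mem_Icc (hf01 z.1) (hf01 z.2)))
    (hsqrt.mul_prod hsqrt)
    (ae_of_all _ fun z => min_sub_mul_le_sqrt_mul_sqrt (hf01 z.1) (hf01 z.2))

end MeasureReal

theorem stmt_19_general
    {Ω X : Type*} [MeasurableSpace Ω] [MeasurableSpace X]
    (P : Measure Ω)
    (μ : Measure X) [IsProbabilityMeasure μ]
    (p : X → ℝ) (hpm : Measurable p) (hp01 : ∀ x, p x ∈ Set.Icc (0:ℝ) 1)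
    (U : Ω → ℝ) (hUm : Measurable U)
    (hU : Measure.map U P = volume.restrict (Set.Icc (0:ℝ) 1))
    (R : Ω → ℝ) (hR : ∀ ω, R ω = (μ {x | U ω < p x}).toReal) :
    variance R P ≤ (∫ x, Real.sqrt (p x * (1 - p x)) ∂μ) ^ 2 ∧
    (∫ x, Real.sqrt (p x * (1 - p x)) ∂μ) ^ 2 ≤ ∫ x, p x * (1 - p x) ∂μ ∧
    (∫ x, p x * (1 - p x) ∂μ) ≤ ∫ x, min (p x) (1 - p x) ∂μ := by
  have hR_comp : R = fun ω => μ.real {x | U ω < p x} := by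
    ext ω; rw [hR, measureReal_def]
  have hvar : variance R P = Var[fun t => μ.real {x | t < p x}; volume.restrict (Icc 0 1)] := by
    have hU_law : MeasurePreserving U P (volume.restrict (Icc 0 1)) := ⟨hUm, hU⟩
    rw [hR_comp, hU_law.variance_fun_comp (antitone_measureReal_lt p).measurable.aemeasurable]
  refine ⟨hvar ▸ variance_measureReal_lt_le hpm hp01, ?_, ?_⟩
  · calc (∫ x, √(p x * (1 - p x)) ∂μ) ^ 2
        ≤ ∫ x, √(p x * (1 - p x)) ^ 2 ∂μ := sq_integral_le_integral_sq
          (memLp_of_bounded (ae_of_all _ fun x => sqrt_mul_one_sub_mem_Icc (hp01 x))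
            (by fun_prop) 2)
      _ = ∫ x, p x * (1 - p x) ∂μ :=
          integral_congr_ae (ae_of_all _ fun x => Real.sq_sqrt (mul_one_sub_mem_Icc (hp01 x)).1)
  · exact integral_mono
      (Integrable.of_mem_Icc 0 1 (by fun_prop) (ae_of_all _ fun x => mul_one_sub_mem_Icc (hp01 x)))
      (Integrable.of_mem_Icc 0 1 (by fun_prop) (ae_of_all _ fun x => min_one_sub_mem_Icc (hp01 x)))
      fun x => mul_one_sub_le_min (hp01 x)

theorem stmt_19
    {Ω X : Type*} [MeasurableSpace Ω] [MeasurableSpace X]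
    (P : Measure Ω) [IsProbabilityMeasure P]
    (μ : Measure X) [IsProbabilityMeasure μ]
    (p : X → ℝ) (hpm : Measurable p) (hp01 : ∀ x, p x ∈ Set.Icc (0:ℝ) 1)
    (U : Ω → ℝ) (hUm : Measurable U)
    (hU : Measure.map U P = volume.restrict (Set.Icc (0:ℝ) 1))
    (R : Ω → ℝ) (hR : ∀ ω, R ω = (μ {x | U ω < p x}).toReal) :
    variance R P ≤ (∫ x, Real.sqrt (p x * (1 - p x)) ∂μ) ^ 2 ∧
    (∫ x, Real.sqrt (p x * (1 - p x)) ∂μ) ^ 2 ≤ ∫ x, p x * (1 - p x) ∂μ ∧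
    (∫ x, p x * (1 - p x) ∂μ) ≤ ∫ x, min (p x) (1 - p x) ∂μ :=
  stmt_19_general P μ p hpm hp01 U hUm hU R hR
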